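/- Exploration of finite branches: if γ_k(k−1) ∈ C and γ_k(k) ∉ C for some k, then γ_j(k) = γ_k(k) for all k ≤ j ≤ k + ℓ(γ_k(k)) + 1, and γ_{k + ℓ(γ_k(k)) + 2}(k) ≠ γ_k(k). -/

import Mathlib

/-- A space-time site of `ℤ^d × ℤ`. -/
abbrev Site (d : ℕ) := (Fin d → ℤ) × ℤ

/-- The neighbourhood `U(x,n) = {(y,n+1) : ‖x − y‖_∞ ≤ 1}` of a site in the next generation. -/
def nbhd {d : ℕ} (p : Site d) : Set (Site d) :=
  {q | q.2 = p.2 + 1 ∧ ∀ i, |p.1 i - q.1 i| ≤ 1}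

/-- There is a directed open path of length `k` starting at `p` (all `k+1` sites on it open). -/
def hasOpenPath {d : ℕ} (ω : Site d → Bool) (p : Site d) (k : ℕ) : Prop :=
  ∃ γ : ℕ → (Fin d → ℤ), γ 0 = p.1 ∧
    (∀ j < k, ∀ i, |γ (j + 1) i - γ j i| ≤ 1) ∧
    (∀ j ≤ k, ω (γ j, p.2 + (j : ℤ)) = true)

/-- `ellSucc ω p` is `ℓ(p) + 1`, where `ℓ(p)` is the length of the longest directed open
path starting at `p` (with `ℓ(p) = −1`, i.e. `ellSucc ω p = 0`, at closed sites, and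
`ℓ(p) = ∞` on the backbone).  Shifting by one lets us work in `ℕ∞` instead of `{−1} ∪ ℕ∞`. -/
noncomputable def ellSucc {d : ℕ} (ω : Site d → Bool) (p : Site d) : ℕ∞ :=
  sSup {t : ℕ∞ | ∃ k : ℕ, t = (k : ℕ∞) + 1 ∧ hasOpenPath ω p k}

/-- The backbone `C` of the oriented percolation cluster: sites where `ℓ = ∞`. -/
def backbone {d : ℕ} (ω : Site d → Bool) : Set (Site d) := {p | ellSucc ω p = ⊤}

/-- `maximizers ω (k+1) p` is the set `M_k(p)` of maximisers over `U(p)` of the truncated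
length `ℓ_k = ℓ ∧ k` (in the shifted encoding: of `min (ℓ + 1) (k + 1)`), and
`maximizers ω 0 p = M_{−1}(p) = U(p)`. -/
noncomputable def maximizers {d : ℕ} (ω : Site d → Bool) : ℕ → Site d → Set (Site d)
  | 0, p => nbhd p
  | k + 1, p =>
      {q ∈ nbhd p |
        min (ellSucc ω q) ((k : ℕ∞) + 1) =
          sSup ((fun r => min (ellSucc ω r) ((k : ℕ∞) + 1)) '' nbhd p)}

/-- `sel` is a valid local-selection rule for the random permutations encoded by the
rank function `rank`: `rank p` enumerates the neighbourhood `U(p)` injectively (this is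
the permutation `ω̃(p)`), and `sel k p` is the element of `maximizers ω k p`
(i.e. of `M_{k-1}(p)`, with `sel 0 p ∈ M_{−1}(p) = U(p)`) appearing first in this
permutation. -/
def IsSelection {d : ℕ} (ω : Site d → Bool) (rank : Site d → Site d → ℕ)
    (sel : ℕ → Site d → Site d) : Prop :=
  (∀ p : Site d, Set.InjOn (rank p) (nbhd p)) ∧
    ∀ (k : ℕ) (p : Site d),
      sel k p ∈ maximizers ω k p ∧ ∀ q ∈ maximizers ω k p, rank p (sel k p) ≤ rank p q

/-- The locally constructed path `γ_k^{(x,n)}` of length `k` started at `p = (x,n)`: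
`γ_k(0) = p` and `γ_k(j+1) = m_{k−j−2}(γ_k(j))`, where `m_i` is the first element of
`M_i` in the permutation (in the shifted indexing, `γ_k(j+1) = sel (k−j−1) (γ_k(j))`). -/
def gammaPath {d : ℕ} (sel : ℕ → Site d → Site d) (p : Site d) (k : ℕ) : ℕ → Site d
  | 0 => p
  | j + 1 => sel (k - j - 1) (gammaPath sel p k j)

/-! Write `ℓ' = ℓ + 1` (`ellSucc`). The selection `sel s q` does not change when the level `s`
grows, as long as the selected site lies in the backbone or has `ℓ'` below the level: it then
stays a maximiser at every higher level, and every higher-level maximiser is a maximiser at the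
old level, so the first one in the permutation is the same.

Along `γ_k`, a site `γ_k(j)` with `j < k` off the backbone has `ℓ' < k − 1 − j`: otherwise the
maximiser chosen next is again off the backbone with `ℓ'` at least `k − 2 − j`, and this
propagates up to `γ_k(k − 1) ∈ C`. Hence every step before time `k − 1` is stable, and `γ_j`
agrees with `γ_k` up to time `k − 1` for all `j ≥ k`. Finally `q = γ_k(k − 1) ∈ C` has a
neighbour in `C`, so the level-`s` maximisers at `q` are exactly the neighbours with `ℓ' ≥ s`,
and the first of them is `γ_k(k)` precisely while `s ≤ ℓ'(γ_k(k))`. -/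

section

variable {d : ℕ} {ω : Site d → Bool} {p q r : Site d}

section OpenPaths

lemma hasOpenPath_of_le {k m : ℕ} (h : hasOpenPath ω p k) (hm : m ≤ k) : hasOpenPath ω p m := by
  obtain ⟨γ, h0, hstep, hopen⟩ := h
  exact ⟨γ, h0, fun j hj => hstep j (hj.trans_le hm), fun j hj => hopen j (hj.trans hm)⟩

lemma hasOpenPath_zero_iff : hasOpenPath ω p 0 ↔ ω p = true := by
  constructor
  · rintro ⟨γ, h0, -, hopen⟩
    simpa [h0] using hopen 0 le_rfl
  · intro h
    exact ⟨fun _ => p.1, rfl, by simp, by simpa using h⟩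

lemma hasOpenPath_succ_of_mem_nbhd {m : ℕ} (hr : r ∈ nbhd p) (hp : ω p = true)
    (h : hasOpenPath ω r m) :
    hasOpenPath ω p (m + 1) := by
  obtain ⟨γ, h0, hstep, hopen⟩ := h
  obtain ⟨hr2, hr1⟩ := hr
  refine ⟨fun j => if j = 0 then p.1 else γ (j - 1), by simp, ?_, ?_⟩
  · rintro (_ | j) hj i
    · simpa [h0, abs_sub_comm] using hr1 i
    · simpa using hstep j (by omega) i
  · rintro (_ | j) hj
    · simpa using hp
    · have hz : r.2 + (j : ℤ) = p.2 + ((j + 1 : ℕ) : ℤ) := by rw [hr2]; push_cast; ring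
      simpa [hz] using hopen j (by omega)

lemma exists_mem_nbhd_hasOpenPath {m : ℕ} (h : hasOpenPath ω p (m + 1)) :
    ∃ r ∈ nbhd p, hasOpenPath ω r m := by
  obtain ⟨γ, h0, hstep, hopen⟩ := h
  refine ⟨(γ 1, p.2 + 1), ⟨rfl, fun i => ?_⟩, fun j => γ (j + 1), rfl,
    fun j hj i => hstep (j + 1) (by omega) i, fun j hj => ?_⟩
  · simpa [h0, abs_sub_comm] using hstep 0 (by omega) i
  · have hz : p.2 + 1 + (j : ℤ) = p.2 + ((j + 1 : ℕ) : ℤ) := by push_cast; ring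
    simpa [hz] using hopen (j + 1) (by omega)

lemma natCast_add_one_le_ellSucc_iff {k : ℕ} : (k : ℕ∞) + 1 ≤ ellSucc ω p ↔ hasOpenPath ω p k := by
  rw [ENat.add_one_le_iff (ENat.natCast_ne_top k), ellSucc, lt_sSup_iff]
  constructor
  · rintro ⟨_, ⟨m, rfl, hm⟩, hkm⟩
    exact hasOpenPath_of_le hm
      (by exact_mod_cast (ENat.lt_add_one_iff (ENat.natCast_ne_top m)).1 hkm)
  · intro h
    exact ⟨_, ⟨k, rfl, h⟩, by exact_mod_cast k.lt_succ_self⟩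

lemma one_le_ellSucc_iff : 1 ≤ ellSucc ω p ↔ ω p = true := by
  simpa using (natCast_add_one_le_ellSucc_iff (ω := ω) (p := p) (k := 0)).trans hasOpenPath_zero_iff

lemma ellSucc_add_one_le (hp : ω p = true) (hr : r ∈ nbhd p) :
    ellSucc ω r + 1 ≤ ellSucc ω p := by
  refine ENat.forall_natCast_le_iff_le.1 fun a ha => ?_
  rcases a with _ | _ | m
  · exact bot_le
  · exact one_le_ellSucc_iff.2 hp
  · have hm : hasOpenPath ω r m := natCast_add_one_le_ellSucc_iff.1 <|
      (ENat.add_le_add_iff_right ENat.one_ne_top).1 (by exact_mod_cast ha)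
    exact_mod_cast natCast_add_one_le_ellSucc_iff.2 (hasOpenPath_succ_of_mem_nbhd hr hp hm)

lemma nbhd_finite (p : Site d) : (nbhd p).Finite := by
  refine ((Set.Finite.pi fun i => Set.finite_Icc (p.1 i - 1) (p.1 i + 1)).prod
    (Set.finite_singleton (p.2 + 1))).subset ?_
  rintro q ⟨hq2, hq1⟩
  exact ⟨fun i _ => by constructor <;> linarith [abs_le.1 (hq1 i)], hq2⟩

lemma nbhd_nonempty (p : Site d) : (nbhd p).Nonempty :=
  ⟨(p.1, p.2 + 1), rfl, by simp⟩

lemma exists_mem_nbhd_mem_backbone (hp : p ∈ backbone ω) : ∃ b ∈ nbhd p, b ∈ backbone ω := by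
  obtain ⟨b, hb, hmax⟩ := Set.exists_max_image _ (ellSucc ω) (nbhd_finite p) (nbhd_nonempty p)
  refine ⟨b, hb, ENat.eq_top_iff_forall_ge.2 fun n => ?_⟩
  have hpath : hasOpenPath ω p (n + 1) := natCast_add_one_le_ellSucc_iff.1 (by
    rw [show ellSucc ω p = ⊤ from hp]; exact le_top)
  obtain ⟨r, hr, hrpath⟩ := exists_mem_nbhd_hasOpenPath hpath
  exact (le_self_add.trans (natCast_add_one_le_ellSucc_iff.2 hrpath)).trans (hmax r hr)

lemma notMem_backbone_of_mem_nbhd (hp : p ∉ backbone ω) (hpo : ω p = true) (hr : r ∈ nbhd p) :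
    r ∉ backbone ω := fun hrC =>
  hp <| top_le_iff.1 <| by simpa [show ellSucc ω r = ⊤ from hrC] using ellSucc_add_one_le hpo hr

end OpenPaths

section Maximizers

variable {b z : Site d}

lemma maximizers_subset_nbhd (ω : Site d → Bool) (k : ℕ) (q : Site d) :
    maximizers ω k q ⊆ nbhd q := by
  cases k with
  | zero => exact subset_rfl
  | succ k => exact Set.sep_subset _ _

lemma mem_maximizers_succ_iff {s : ℕ} :
    z ∈ maximizers ω (s + 1) q ↔
      z ∈ nbhd q ∧ ∀ y ∈ nbhd q, min (ellSucc ω y) ((s : ℕ∞) + 1) ≤ ellSucc ω z := by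
  constructor
  · rintro ⟨hz, hmax⟩
    refine ⟨hz, fun y hy => le_trans ?_ (min_le_left _ ((s : ℕ∞) + 1))⟩
    exact hmax ▸ le_sSup ⟨y, hy, rfl⟩
  · rintro ⟨hz, hmax⟩
    refine ⟨hz, le_antisymm (le_sSup ⟨z, hz, rfl⟩) (sSup_le ?_)⟩
    rintro _ ⟨y, hy, rfl⟩
    exact le_min (hmax y hy) (min_le_right _ _)

lemma mem_maximizers_iff_of_mem_backbone (hb : b ∈ nbhd q) (hbC : b ∈ backbone ω) {s : ℕ} :
    z ∈ maximizers ω s q ↔ z ∈ nbhd q ∧ (s : ℕ∞) ≤ ellSucc ω z := by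
  rcases s with _ | s
  · simp [maximizers]
  rw [mem_maximizers_succ_iff, Nat.cast_succ]
  refine and_congr_right fun _ => ⟨fun h => ?_, fun h y _ => (min_le_right _ _).trans h⟩
  simpa [show ellSucc ω b = ⊤ from hbC] using h b hb

lemma le_ellSucc_of_mem_maximizers {n : ℕ} (hz : z ∈ maximizers ω (n + 1) q)
    (hq : (n : ℕ∞) + 1 ≤ ellSucc ω q) : (n : ℕ∞) ≤ ellSucc ω z := by
  rcases n with _ | m
  · exact bot_le
  obtain ⟨r, hr, hpath⟩ := exists_mem_nbhd_hasOpenPath (natCast_add_one_le_ellSucc_iff.1 hq)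
  refine le_trans ?_ ((mem_maximizers_succ_iff.1 hz).2 r hr)
  push_cast
  exact le_min (natCast_add_one_le_ellSucc_iff.2 hpath) le_self_add

lemma mem_maximizers_of_le {t s : ℕ} (hz : z ∈ maximizers ω t q) (hts : t ≤ s)
    (h : z ∈ backbone ω ∨ ellSucc ω z < t) : z ∈ maximizers ω s q := by
  rcases s with _ | s
  · exact maximizers_subset_nbhd ω t q hz
  refine mem_maximizers_succ_iff.2 ⟨maximizers_subset_nbhd ω t q hz, fun y hy => ?_⟩
  rcases h with hC | hlt
  · simp [show ellSucc ω z = ⊤ from hC]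
  rcases t with _ | t
  · exact absurd hlt (by simp)
  push_cast at hlt
  have hmin := (mem_maximizers_succ_iff.1 hz).2 y hy
  exact (min_le_left _ _).trans (not_lt.1 fun hyz => (lt_min hyz hlt).not_ge hmin)

lemma maximizers_subset_of_mem {t s : ℕ} (hts : t ≤ s) (hzt : z ∈ maximizers ω t q)
    (hzs : z ∈ maximizers ω s q) : maximizers ω s q ⊆ maximizers ω t q := by
  rcases t with _ | t
  · exact maximizers_subset_nbhd ω s q
  rcases s with _ | s
  · omega
  intro x hx
  rw [mem_maximizers_succ_iff] at hzt hzs hx ⊢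
  refine ⟨hx.1, fun y hy => ?_⟩
  calc min (ellSucc ω y) ((t : ℕ∞) + 1)
      ≤ min (ellSucc ω z) ((s : ℕ∞) + 1) :=
        le_min (hzt.2 y hy) ((min_le_right _ _).trans (by exact_mod_cast hts))
    _ ≤ ellSucc ω x := hx.2 z hzs.1

end Maximizers

section Selection

variable {rank : Site d → Site d → ℕ} {sel : ℕ → Site d → Site d}

lemma IsSelection.sel_mem (hsel : IsSelection ω rank sel) (k : ℕ) (q : Site d) :
    sel k q ∈ maximizers ω k q :=
  (hsel.2 k q).1

lemma IsSelection.sel_mem_nbhd (hsel : IsSelection ω rank sel) (k : ℕ) (q : Site d) :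
    sel k q ∈ nbhd q :=
  maximizers_subset_nbhd ω k q (hsel.sel_mem k q)

lemma IsSelection.sel_eq_of_le (hsel : IsSelection ω rank sel) {t s : ℕ} (hts : t ≤ s)
    (h : sel t q ∈ maximizers ω s q) : sel s q = sel t q :=
  hsel.1 q (hsel.sel_mem_nbhd s q) (hsel.sel_mem_nbhd t q) <| le_antisymm ((hsel.2 s q).2 _ h)
    ((hsel.2 t q).2 _ (maximizers_subset_of_mem hts (hsel.sel_mem t q) h (hsel.sel_mem s q)))

lemma IsSelection.sel_eq_sel_zero_iff (hsel : IsSelection ω rank sel) (hq : q ∈ backbone ω)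
    {s : ℕ} : sel s q = sel 0 q ↔ (s : ℕ∞) ≤ ellSucc ω (sel 0 q) := by
  obtain ⟨b, hb, hbC⟩ := exists_mem_nbhd_mem_backbone hq
  constructor
  · intro h
    rw [← h]
    exact ((mem_maximizers_iff_of_mem_backbone hb hbC).1 (hsel.sel_mem s q)).2
  · intro h
    exact hsel.sel_eq_of_le s.zero_le
      ((mem_maximizers_iff_of_mem_backbone hb hbC).2 ⟨hsel.sel_mem_nbhd 0 q, h⟩)

end Selection

section LocalPath

variable {rank : Site d → Site d → ℕ} {sel : ℕ → Site d → Site d} {n : ℕ}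

lemma ellSucc_gammaPath_lt (hsel : IsSelection ω rank sel)
    (hin : gammaPath sel p (n + 1) n ∈ backbone ω) {j : ℕ} (hj : j ≤ n)
    (hjC : gammaPath sel p (n + 1) j ∉ backbone ω) :
    ellSucc ω (gammaPath sel p (n + 1) j) < (n - j : ℕ) := by
  suffices key : ∀ m j, j + m = n → gammaPath sel p (n + 1) j ∉ backbone ω →
      (m : ℕ∞) ≤ ellSucc ω (gammaPath sel p (n + 1) j) → False from
    lt_of_not_ge (key (n - j) j (by omega) hjC)
  intro m
  induction m with
  | zero =>
    intro j hj hjC _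
    exact hjC (by rwa [show j = n by omega])
  | succ m ih =>
    intro j hj hjC hlen
    have hnext : gammaPath sel p (n + 1) (j + 1) = sel (m + 1) (gammaPath sel p (n + 1) j) := by
      rw [gammaPath, show n + 1 - j - 1 = m + 1 by omega]
    have hopen : ω (gammaPath sel p (n + 1) j) = true :=
      one_le_ellSucc_iff.1 (le_trans (by exact_mod_cast m.succ_pos) hlen)
    refine ih (j + 1) (by omega) ?_ ?_ <;> rw [hnext]
    · exact notMem_backbone_of_mem_nbhd hjC hopen (hsel.sel_mem_nbhd _ _)
    · exact le_ellSucc_of_mem_maximizers (hsel.sel_mem _ _) (by exact_mod_cast hlen)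

lemma gammaPath_eq_of_le (hsel : IsSelection ω rank sel)
    (hin : gammaPath sel p (n + 1) n ∈ backbone ω) {j : ℕ} (hj : n + 1 ≤ j) :
    ∀ i ≤ n, gammaPath sel p j i = gammaPath sel p (n + 1) i := by
  intro i
  induction i with
  | zero => intro _; rfl
  | succ i ih =>
    intro hi
    rw [gammaPath, gammaPath, ih (by omega)]
    refine hsel.sel_eq_of_le (by omega) (mem_maximizers_of_le (hsel.sel_mem _ _) (by omega) ?_)
    refine or_iff_not_imp_left.2 fun hC => (ellSucc_gammaPath_lt hsel hin hi hC).trans_le ?_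
    exact_mod_cast (by omega : n - (i + 1) ≤ n + 1 - i - 1)

end LocalPath

end

theorem gammaPath_explores_finite_branch_general (d : ℕ) (ω : Site d → Bool)
    (rank : Site d → Site d → ℕ) (sel : ℕ → Site d → Site d)
    (hsel : IsSelection ω rank sel) (p : Site d) (k : ℕ) (hk : 1 ≤ k)
    (hin : gammaPath sel p k (k - 1) ∈ backbone ω)
    (L : ℕ) (hL : ellSucc ω (gammaPath sel p k k) = (L : ℕ∞)) :
    (∀ j, k ≤ j → j ≤ k + L → gammaPath sel p j k = gammaPath sel p k k) ∧
      gammaPath sel p (k + L + 1) k ≠ gammaPath sel p k k := by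
  obtain ⟨n, rfl⟩ : ∃ n, k = n + 1 := ⟨k - 1, by omega⟩
  rw [Nat.add_sub_cancel] at hin
  have hγ : ∀ j, n + 1 ≤ j →
      gammaPath sel p j (n + 1) = sel (j - (n + 1)) (gammaPath sel p (n + 1) n) := by
    intro j hj
    rw [gammaPath, gammaPath_eq_of_le hsel hin hj n le_rfl, Nat.sub_sub]
  rw [hγ _ le_rfl, Nat.sub_self] at hL ⊢
  refine ⟨fun j hj hjL => ?_, ?_⟩
  · rw [hγ j hj, hsel.sel_eq_sel_zero_iff hin, hL]
    exact_mod_cast (by omega : j - (n + 1) ≤ L)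
  · rw [hγ _ (by omega), Ne, hsel.sel_eq_sel_zero_iff hin, hL]
    norm_cast
    omega

/-- Exploration of finite branches: if `γ_k(k−1) ∈ C` and `γ_k(k) ∉ C` for some `k ≥ 1`,
then `γ_j(k) = γ_k(k)` for all `k ≤ j ≤ k + ℓ(γ_k(k)) + 1`, and
`γ_{k+ℓ(γ_k(k))+2}(k) ≠ γ_k(k)`.  Here `L = ℓ(γ_k(k)) + 1` in the shifted encoding
`ellSucc = ℓ + 1`, so the two conclusions read `j ≤ k + L` and `γ_{k+L+1}(k) ≠ γ_k(k)`. -/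
theorem gammaPath_explores_finite_branch (d : ℕ) (ω : Site d → Bool)
    (rank : Site d → Site d → ℕ) (sel : ℕ → Site d → Site d)
    (hsel : IsSelection ω rank sel) (p : Site d) (k : ℕ) (hk : 1 ≤ k)
    (hin : gammaPath sel p k (k - 1) ∈ backbone ω)
    (hout : gammaPath sel p k k ∉ backbone ω)
    (L : ℕ) (hL : ellSucc ω (gammaPath sel p k k) = (L : ℕ∞)) :
    (∀ j, k ≤ j → j ≤ k + L → gammaPath sel p j k = gammaPath sel p k k) ∧
      gammaPath sel p (k + L + 1) k ≠ gammaPath sel p k k :=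
  gammaPath_explores_finite_branch_general d ω rank sel hsel p k hk hin L hL
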